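/- For every α with 0 < α < 1, the second derivative of the Lin surprisal I*(α) = (1/2)·log₂( 4 α^α / (α+1)^{α+1} ) at α equals 1 / ((α² + α) · ln 4), which is strictly positive; hence I* is strictly convex on (0,1). -/

import Mathlib

/-! On `t > 0` the logarithm of `4 t^t / (t+1)^(t+1)` is `log 4 + t log t - (t+1) log (t+1)`,
so, since `(1/2) log₂ = log / log 4`, the first derivative of `I*` is
`(log t - log (t+1)) / log 4` and the second is `(1/t - 1/(t+1)) / log 4 = 1 / ((t² + t) log 4)`.
This is positive on all of `(0, ∞)`, which gives strict convexity there. -/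

open Real Set Filter

noncomputable def linSurprisal (t : ℝ) : ℝ :=
  (1 / 2) * logb 2 (4 * t ^ t / (t + 1) ^ (t + 1))

lemma half_mul_logb_two (x : ℝ) : (1 / 2) * logb 2 x = log x / log 4 := by
  rw [show (4 : ℝ) = 2 ^ 2 by norm_num, log_pow, logb]
  push_cast
  ring

lemma log_four_mul_rpow_self_div {t : ℝ} (ht : 0 < t) :
    log (4 * t ^ t / (t + 1) ^ (t + 1)) = log 4 + t * log t - (t + 1) * log (t + 1) := by
  have ht1 : 0 < t + 1 := by linarith
  rw [log_div (by positivity) (rpow_pos_of_pos ht1 _).ne', log_mul (by norm_num)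
    (rpow_pos_of_pos ht t).ne', log_rpow ht, log_rpow ht1]

lemma linSurprisal_eq {t : ℝ} (ht : 0 < t) :
    linSurprisal t = (log 4 + t * log t - (t + 1) * log (t + 1)) / log 4 := by
  rw [linSurprisal, half_mul_logb_two, log_four_mul_rpow_self_div ht]

lemma hasDerivAt_linSurprisal {t : ℝ} (ht : 0 < t) :
    HasDerivAt linSurprisal ((log t - log (t + 1)) / log 4) t := by
  have hlog : HasDerivAt (fun s => (log 4 + s * log s - (s + 1) * log (s + 1)) / log 4)
      ((log t - log (t + 1)) / log 4) t := by
    refine HasDerivAt.congr_deriv ((((hasDerivAt_mul_log ht.ne').const_add (log 4)).sub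
      ((hasDerivAt_mul_log (by linarith)).comp_add_const t 1)).div_const (log 4)) ?_
    ring
  exact hlog.congr_of_eventuallyEq <|
    eventually_of_mem (Ioi_mem_nhds ht) fun s hs => linSurprisal_eq hs

lemma hasDerivAt_deriv_linSurprisal {t : ℝ} (ht : 0 < t) :
    HasDerivAt (deriv linSurprisal) (1 / ((t ^ 2 + t) * log 4)) t := by
  have hlog : HasDerivAt (fun s => (log s - log (s + 1)) / log 4)
      (1 / ((t ^ 2 + t) * log 4)) t := by
    refine HasDerivAt.congr_deriv (((hasDerivAt_log ht.ne').sub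
      ((hasDerivAt_log (by linarith)).comp_add_const t 1)).div_const (log 4)) ?_
    field_simp
    ring
  exact hlog.congr_of_eventuallyEq <|
    eventually_of_mem (Ioi_mem_nhds ht) fun s hs => (hasDerivAt_linSurprisal hs).deriv

lemma deriv2_linSurprisal {t : ℝ} (ht : 0 < t) :
    deriv (deriv linSurprisal) t = 1 / ((t ^ 2 + t) * log 4) :=
  (hasDerivAt_deriv_linSurprisal ht).deriv

lemma one_div_sq_add_mul_log_four_pos {t : ℝ} (ht : 0 < t) : 0 < 1 / ((t ^ 2 + t) * log 4) := by
  have := log_pos (by norm_num : (1 : ℝ) < 4)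
  positivity

lemma strictConvexOn_linSurprisal : StrictConvexOn ℝ (Ioi 0) linSurprisal := by
  refine strictConvexOn_of_deriv2_pos (convex_Ioi 0)
    (fun t ht => (hasDerivAt_linSurprisal ht).continuousAt.continuousWithinAt) fun t ht => ?_
  rw [interior_Ioi] at ht
  simpa [deriv2_linSurprisal ht] using one_div_sq_add_mul_log_four_pos ht

theorem linSurprisal_secondDeriv (α : ℝ) (h0 : 0 < α) :
    deriv (deriv
        (fun t : ℝ => (1 / 2) * Real.logb 2 (4 * t ^ t / (t + 1) ^ (t + 1)))) α =
        1 / ((α ^ 2 + α) * Real.log 4) ∧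
      0 < 1 / ((α ^ 2 + α) * Real.log 4) ∧
      StrictConvexOn ℝ (Set.Ioo 0 1)
        (fun t : ℝ => (1 / 2) * Real.logb 2 (4 * t ^ t / (t + 1) ^ (t + 1))) :=
  ⟨deriv2_linSurprisal h0, one_div_sq_add_mul_log_four_pos h0,
    strictConvexOn_linSurprisal.subset Ioo_subset_Ioi_self (convex_Ioo 0 1)⟩
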